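/- arXiv:1711.00420 — 4 statements merged into one kernel-verified Lean document; each statement's English description precedes it below -/
import Mathlib

section
/- Let b_1, ..., b_m be the bumped node sequence and x_1, ..., x_m the bumped letter sequence for the ε-insertion of a letter x into a semistandard (X,λ)-tableau T. Then for i < j: (1) x_i < x_j if ε = 0 and x_i ≤ x_j if ε = 1; (2) T(b_i) < T(b_j) if ε = 0 and T(b_i) ≤ T(b_j) if ε = 1. -/
namespace SuperRSK

variable {X Y : Type*}

/-- The super order `≺` on a superalphabet: `a ≺ b` iff (`a` odd, `b` even), or
(both even and `a < b`), or (both odd and `a > b`). Odd means parity `true`. -/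
def SuperPrec [LinearOrder X] (par : X → Bool) (a b : X) : Prop :=
  (par a = true ∧ par b = false) ∨
  (par a = false ∧ par b = false ∧ a < b) ∨
  (par a = true ∧ par b = true ∧ b < a)

/-- The `δ`-coordinate of a node: row if `δ = false`, column if `δ = true`. -/
def coord (δ : Bool) (u : ℕ × ℕ) : ℕ := if δ then u.2 else u.1

/-- A tableau is a function `ℕ × ℕ → WithTop X`, equal to `⊤` outside its diagram.
Semistandard: the support is a Young diagram and entries are non-decreasing
(both encoded by monotonicity into `WithTop X`), equal entries in a row are even,
and equal entries in a column are odd. -/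
def IsSStd [LinearOrder X] (par : X → Bool) (T : ℕ × ℕ → WithTop X) : Prop :=
  (∀ u v : ℕ × ℕ, u.1 ≤ v.1 → u.2 ≤ v.2 → T u ≤ T v) ∧
  (∀ u v : ℕ × ℕ, ∀ a : X, u.1 = v.1 → u.2 < v.2 → T u = (a : WithTop X) →
    T v = (a : WithTop X) → par a = false) ∧
  (∀ u v : ℕ × ℕ, ∀ a : X, u.2 = v.2 → u.1 < v.1 → T u = (a : WithTop X) →
    T v = (a : WithTop X) → par a = true)

/-- A standard tableau: semistandard with no repeated letters. -/
def IsStd [LinearOrder X] (par : X → Bool) (T : ℕ × ℕ → WithTop X) : Prop :=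
  IsSStd par T ∧
  ∀ u v : ℕ × ℕ, ∀ a : X, T u = (a : WithTop X) → T v = (a : WithTop X) → u = v

/-- The comparison used in `ε`-insertion: strict for `ε = false`, weak for `ε = true`. -/
def cmpIns [LinearOrder X] (ε : Bool) (x : X) (v : WithTop X) : Prop :=
  if ε then (x : WithTop X) ≤ v else (x : WithTop X) < v

/-- The comparison used in `ε`-extraction: strict for `ε = false`, weak for `ε = true`. -/
def cmpExt [LinearOrder X] (ε : Bool) (y : X) (v : WithTop X) : Prop :=
  if ε then v ≤ (y : WithTop X) else v < (y : WithTop X)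

/-- `BumpSeq ε par T x b xs m` says `b 0, …, b (m-1)` is the bumped node sequence and
`xs 0, …, xs (m-1)` the bumped letter sequence for the `ε`-insertion of `x` into `T`:
`xs 0 = x`; at step `j` the current letter `xs j` is placed at the smallest node `b j`
of the `i`-th row (if `ε + parity (xs j) = 0`) or column (if `= 1`) satisfying the
`ε`-comparison, where `i = 0` at the start and afterwards is one more than the
corresponding coordinate of the previous bumped node; the bumped letter becomes the
next inserted letter, until an empty node (`⊤`) is reached. -/
def BumpSeq [LinearOrder X] (ε : Bool) (par : X → Bool) (T : ℕ × ℕ → WithTop X)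
    (x : X) (b : ℕ → ℕ × ℕ) (xs : ℕ → X) (m : ℕ) : Prop :=
  0 < m ∧ xs 0 = x ∧
  (∀ j, j + 1 < m → T (b j) = (xs (j + 1) : WithTop X)) ∧
  T (b (m - 1)) = ⊤ ∧
  ∀ j, j < m →
    (coord (Bool.xor ε (par (xs j))) (b j) =
      (if j = 0 then 0 else coord (Bool.xor ε (par (xs j))) (b (j - 1)) + 1)) ∧
    cmpIns ε (xs j) (T (b j)) ∧
    ∀ v : ℕ × ℕ,
      coord (Bool.xor ε (par (xs j))) v = coord (Bool.xor ε (par (xs j))) (b j) →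
      cmpIns ε (xs j) (T v) →
      coord (!(Bool.xor ε (par (xs j)))) (b j) ≤ coord (!(Bool.xor ε (par (xs j)))) v

/-- `InsResult T b xs m R` says `R` is the tableau obtained from `T` by the insertion
with bumped nodes `b` and bumped letters `xs`: `R (b k) = xs k` and `R` agrees with `T`
elsewhere. -/
def InsResult [LinearOrder X] (T : ℕ × ℕ → WithTop X) (b : ℕ → ℕ × ℕ) (xs : ℕ → X)
    (m : ℕ) (R : ℕ × ℕ → WithTop X) : Prop :=
  (∀ k, k < m → R (b k) = (xs k : WithTop X)) ∧
  ∀ u : ℕ × ℕ, (∀ k, k < m → u ≠ b k) → R u = T u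

/-- `ExtractSeq ε par T u c ys m` says `c 0, …, c (m-1)` is the unbumped node sequence
and `ys 0, …, ys (m-1)` the unbumped letter sequence for the `ε`-extraction at `u`:
`c 0 = u`, `ys 0 = T u`; at each step `c (j+1)` is the greatest node, in the row/column
(according to `ε` plus the parity of `ys j`) preceding that of `c j`, whose entry is
`ε`-below `ys j`; the process stops upon reaching the first row/column. -/
def ExtractSeq [LinearOrder X] (ε : Bool) (par : X → Bool) (T : ℕ × ℕ → WithTop X)
    (u : ℕ × ℕ) (c : ℕ → ℕ × ℕ) (ys : ℕ → X) (m : ℕ) : Prop :=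
  0 < m ∧ c 0 = u ∧ T u = (ys 0 : WithTop X) ∧
  (∀ j, j + 1 < m →
    0 < coord (Bool.xor ε (par (ys j))) (c j) ∧
    coord (Bool.xor ε (par (ys j))) (c (j + 1)) + 1 =
      coord (Bool.xor ε (par (ys j))) (c j) ∧
    T (c (j + 1)) = (ys (j + 1) : WithTop X) ∧
    cmpExt ε (ys j) (T (c (j + 1))) ∧
    ∀ v : ℕ × ℕ,
      coord (Bool.xor ε (par (ys j))) v + 1 = coord (Bool.xor ε (par (ys j))) (c j) →
      cmpExt ε (ys j) (T v) →
      coord (!(Bool.xor ε (par (ys j)))) v ≤ coord (!(Bool.xor ε (par (ys j)))) (c (j + 1))) ∧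
  coord (Bool.xor ε (par (ys (m - 1)))) (c (m - 1)) = 0

/-- `ExtResult T c ys m R` says `R` is the tableau obtained from `T` by the extraction
with unbumped nodes `c` and letters `ys`: each `c k` (`k ≥ 1`) receives `ys (k-1)`, the
initial node `c 0` is emptied, and `R` agrees with `T` elsewhere. -/
def ExtResult [LinearOrder X] (T : ℕ × ℕ → WithTop X) (c : ℕ → ℕ × ℕ) (ys : ℕ → X)
    (m : ℕ) (R : ℕ × ℕ → WithTop X) : Prop :=
  (∀ k, 0 < k → k < m → R (c k) = (ys (k - 1) : WithTop X)) ∧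
  (∀ v : ℕ × ℕ, (∀ k, k < m → v ≠ c k) → R v = T v) ∧
  ((∀ k, 0 < k → k < m → c 0 ≠ c k) → R (c 0) = ⊤)

/-- The paper's `≤_ε`. -/
def EpsLE {α : Type*} [Preorder α] (ε : Bool) (a b : α) : Prop :=
  if ε then a ≤ b else a < b

instance {α : Type*} [Preorder α] (ε : Bool) : IsTrans α (EpsLE ε) := by
  cases ε
  exacts [⟨fun _ _ _ ↦ lt_trans⟩, ⟨fun _ _ _ ↦ le_trans⟩]

@[simp]
theorem epsLE_coe_iff {α : Type*} [Preorder α] (ε : Bool) (a b : α) :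
    EpsLE ε (a : WithTop α) b ↔ EpsLE ε a b := by
  cases ε <;> simp [EpsLE]

theorem _root_.Nat.rel_of_forall_rel_succ_of_lt_of_lt {β : Type*} (r : β → β → Prop)
    [IsTrans β r] {f : ℕ → β} {m i j : ℕ} (h : ∀ k, k + 1 < m → r (f k) (f (k + 1)))
    (hij : i < j) (hj : j < m) : r (f i) (f j) := by
  induction j, hij using Nat.le_induction with
  | base => exact h i hj
  | succ j hij ih => exact _root_.trans (ih (by omega)) (h j hj)

theorem BumpSeq.letter_epsLE_entry [LinearOrder X] {ε : Bool} {par : X → Bool}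
    {T : ℕ × ℕ → WithTop X} {x : X} {b : ℕ → ℕ × ℕ} {xs : ℕ → X} {m : ℕ}
    (hb : BumpSeq ε par T x b xs m) {k : ℕ} (hk : k < m) :
    EpsLE ε (xs k : WithTop X) (T (b k)) :=
  (hb.2.2.2.2 k hk).2.1

theorem BumpSeq.entry_eq_next_letter [LinearOrder X] {ε : Bool} {par : X → Bool}
    {T : ℕ × ℕ → WithTop X} {x : X} {b : ℕ → ℕ × ℕ} {xs : ℕ → X} {m : ℕ}
    (hb : BumpSeq ε par T x b xs m) {k : ℕ} (hk : k + 1 < m) :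
    T (b k) = xs (k + 1) :=
  hb.2.2.1 k hk

theorem stmt6_general [LinearOrder X] (ε : Bool) (par : X → Bool) (T : ℕ × ℕ → WithTop X)
    (x : X) (b : ℕ → ℕ × ℕ) (xs : ℕ → X) (m : ℕ)
    (hb : BumpSeq ε par T x b xs m)
    (i j : ℕ) (hij : i < j) (hj : j < m) :
    (if ε then xs i ≤ xs j else xs i < xs j) ∧
    (if ε then T (b i) ≤ T (b j) else T (b i) < T (b j)) := by
  -- Bumped letters and entries interleave in the single chain
  -- `xs k ≤_ε T (b k) = xs (k + 1) ≤_ε T (b (k + 1)) = ⋯`.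
  have hletters : ∀ k, k + 1 < m → EpsLE ε (xs k : WithTop X) (xs (k + 1)) := fun k hk ↦
    hb.entry_eq_next_letter hk ▸ hb.letter_epsLE_entry (by omega)
  have hentries : ∀ k, k + 1 < m → EpsLE ε (T (b k)) (T (b (k + 1))) := fun k hk ↦
    hb.entry_eq_next_letter hk ▸ hb.letter_epsLE_entry hk
  constructor
  · exact (epsLE_coe_iff ε _ _).mp <|
      Nat.rel_of_forall_rel_succ_of_lt_of_lt (f := fun k ↦ (xs k : WithTop X)) _ hletters hij hj
  · exact Nat.rel_of_forall_rel_succ_of_lt_of_lt (f := fun k ↦ T (b k)) _ hentries hij hj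

/-- Bumped letters and bumped entries are increasing along an `ε`-insertion
(strictly for `ε = 0`, weakly for `ε = 1`). -/
theorem stmt6 [LinearOrder X] (ε : Bool) (par : X → Bool) (T : ℕ × ℕ → WithTop X)
    (x : X) (b : ℕ → ℕ × ℕ) (xs : ℕ → X) (m : ℕ)
    (hT : IsSStd par T) (hb : BumpSeq ε par T x b xs m)
    (i j : ℕ) (hij : i < j) (hj : j < m) :
    (if ε then xs i ≤ xs j else xs i < xs j) ∧
    (if ε then T (b i) ≤ T (b j) else T (b i) < T (b j)) :=
  stmt6_general ε par T x b xs m hb i j hij hj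

end SuperRSK
end

section
/- Let b_1, ..., b_m be the bumped node sequence for the ε-insertion of a letter x into a semistandard (X,λ)-tableau T. Then for i < j, it is not the case that b_i ≥ b_j in the componentwise partial order on nodes. -/
/-! A tableau entry that is bumped is the next letter inserted, and the comparison `cmpIns`
forces the bumped letters to increase: strictly for `ε = false`, weakly for `ε = true`. If
`b j ≤ b i` with `i < j`, monotonicity of `T` gives `xs (j + 1) ≤ xs (i + 1)` (the node `b j`
cannot be the empty terminal node, since `b i` is not). For `ε = false` this contradicts
strict increase. For `ε = true` the letters `xs (i + 1), …, xs j` all coincide, so the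
insertion runs along the same kind of line (row or column) at every step and the
corresponding coordinate of the bumped node goes up by one each time, again contradicting
`b j ≤ b i`. -/

namespace SuperRSK

variable {X Y : Type*}

section

variable [LinearOrder X]

lemma coord_le_coord {u v : ℕ × ℕ} (h₁ : u.1 ≤ v.1) (h₂ : u.2 ≤ v.2) (δ : Bool) :
    coord δ u ≤ coord δ v := by
  cases δ <;> simpa [coord]

lemma le_of_cmpIns_coe {ε : Bool} {x y : X} (h : cmpIns ε x y) : x ≤ y := by
  cases ε
  · exact (WithTop.coe_lt_coe.mp h).le
  · exact WithTop.coe_le_coe.mp h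

lemma lt_of_cmpIns_false_coe {x y : X} (h : cmpIns false x y) : x < y :=
  WithTop.coe_lt_coe.mp h

namespace BumpSeq

variable {ε : Bool} {par : X → Bool} {T : ℕ × ℕ → WithTop X} {x : X} {b : ℕ → ℕ × ℕ}
  {xs : ℕ → X} {m : ℕ}

lemma apply_eq_coe (hb : BumpSeq ε par T x b xs m) {j : ℕ} (hj : j + 1 < m) :
    T (b j) = xs (j + 1) :=
  hb.2.2.1 j hj

lemma cmpIns_succ (hb : BumpSeq ε par T x b xs m) {j : ℕ} (hj : j + 1 < m) :
    cmpIns ε (xs j) (xs (j + 1)) :=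
  hb.apply_eq_coe hj ▸ (hb.2.2.2.2 j (by omega)).2.1

lemma monotoneOn_letters (hb : BumpSeq ε par T x b xs m) : MonotoneOn xs (Set.Iio m) :=
  monotoneOn_of_le_succ Set.ordConnected_Iio fun _ _ _ hj ↦
    le_of_cmpIns_coe (hb.cmpIns_succ hj)

lemma strictMonoOn_letters (hb : BumpSeq false par T x b xs m) : StrictMonoOn xs (Set.Iio m) :=
  strictMonoOn_of_lt_succ Set.ordConnected_Iio fun _ _ _ hj ↦
    lt_of_cmpIns_false_coe (hb.cmpIns_succ hj)

lemma coord_succ (hb : BumpSeq ε par T x b xs m) {j : ℕ} (hj : j + 1 < m) :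
    coord (ε ^^ par (xs (j + 1))) (b (j + 1)) = coord (ε ^^ par (xs (j + 1))) (b j) + 1 := by
  simpa using (hb.2.2.2.2 (j + 1) hj).1

lemma coord_add_of_letters_eq (hb : BumpSeq ε par T x b xs m) {a : X} {i d : ℕ}
    (hd : i + d < m) (ha : ∀ k, i < k → k ≤ i + d → xs k = a) :
    coord (ε ^^ par a) (b (i + d)) = coord (ε ^^ par a) (b i) + d := by
  induction d with
  | zero => rfl
  | succ d ih =>
    have hstep := hb.coord_succ (j := i + d) (by omega)
    rw [ha (i + d + 1) (by omega) le_rfl] at hstep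
    rw [← add_assoc, hstep, ih (by omega) fun k hik hk ↦ ha k hik (by omega), add_assoc]

end BumpSeq

end

/-- For `i < j`, the bumped node `b i` is not componentwise `≥ b j`. -/
theorem stmt7 [LinearOrder X] (ε : Bool) (par : X → Bool) (T : ℕ × ℕ → WithTop X)
    (x : X) (b : ℕ → ℕ × ℕ) (xs : ℕ → X) (m : ℕ)
    (hT : IsSStd par T) (hb : BumpSeq ε par T x b xs m)
    (i j : ℕ) (hij : i < j) (hj : j < m) :
    ¬((b j).1 ≤ (b i).1 ∧ (b j).2 ≤ (b i).2) := by
  rintro ⟨h₁, h₂⟩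
  have hTle : T (b j) ≤ T (b i) := hT.1 _ _ h₁ h₂
  have hjm : j + 1 < m := by
    by_contra hjm
    rw [show j = m - 1 by omega, hb.2.2.2.1, top_le_iff, hb.apply_eq_coe (by omega)] at hTle
    exact WithTop.coe_ne_top hTle
  have hletters : xs (j + 1) ≤ xs (i + 1) := by
    rwa [hb.apply_eq_coe hjm, hb.apply_eq_coe (by omega), WithTop.coe_le_coe] at hTle
  cases ε with
  | false =>
    exact (hb.strictMonoOn_letters (by omega : i + 1 < m) hjm (by omega)).not_ge hletters
  | true =>
    have hconst (k : ℕ) (hik : i < k) (hkj : k ≤ j) : xs k = xs (i + 1) :=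
      le_antisymm ((hb.monotoneOn_letters (by omega : k < m) hjm (by omega)).trans hletters)
        (hb.monotoneOn_letters (by omega : i + 1 < m) (by omega : k < m) hik)
    have hcoord := hb.coord_add_of_letters_eq (d := j - i) (by omega)
      fun k hik hk ↦ hconst k hik (by omega)
    rw [Nat.add_sub_cancel' hij.le] at hcoord
    have := coord_le_coord h₁ h₂ (true ^^ par (xs (i + 1)))
    omega

end SuperRSK
end

section
/- If T is a semistandard (X,λ)-tableau and u is a removable node of [λ], then the result (T →ε u) of ε-extraction at u is a semistandard tableau of shape λ \ {u}. -/
namespace SuperRSK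

variable {X Y : Type*}

/-!
Semistandardness is a condition on horizontally and vertically adjacent nodes, and
transposition (which swaps the two parities) reduces the vertical case to the horizontal one.
Extraction never lowers an entry: `c (k+1)` receives `ys k ≥ ys (k+1)` and `u` is emptied, so
at a node off the path the condition is inherited from `T`. Let `w` be the right neighbour of
`c (k+1)`. If `c (k+1)` was found in a row, its maximality puts `T w` `ε`-above `ys k`. If it
was found in a column, `c k` lies weakly above `w` in the column of `w`, and `T w = ys k` would
contradict the column condition on `T`, the choice of `c k`, or the removability of `u`.
-/

section Adjacent

variable [LinearOrder X] {par : X → Bool}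

/-- `AdjLE par false a b` (resp. `AdjLE par true a b`) is the condition for `b` to stand
directly right of (resp. below) `a` in a semistandard tableau. -/
def AdjLE (par : X → Bool) (p : Bool) (a b : WithTop X) : Prop :=
  a ≤ b ∧ ∀ x : X, a = x → b = x → par x = p

theorem adjLE_top (p : Bool) (a : WithTop X) : AdjLE par p a ⊤ :=
  ⟨le_top, fun _ _ h => absurd h WithTop.top_ne_coe⟩

theorem AdjLE.mono_right {p : Bool} {a b b' : WithTop X} (h : AdjLE par p a b) (hb : b ≤ b') :
    AdjLE par p a b' :=
  ⟨h.1.trans hb, fun x ha hb' => h.2 x ha (le_antisymm (hb.trans_eq hb') (ha ▸ h.1))⟩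

theorem adjLE_not {p : Bool} {a b : WithTop X} :
    AdjLE (fun x => !par x) p a b ↔ AdjLE par (!p) a b := by
  simp only [AdjLE, Bool.not_eq_eq_eq_not]

theorem IsSStd.adjLE_right {T : ℕ × ℕ → WithTop X} (hT : IsSStd par T) (v : ℕ × ℕ) :
    AdjLE par false (T v) (T (v.1, v.2 + 1)) :=
  ⟨hT.1 _ _ le_rfl (Nat.le_succ _), fun x => hT.2.1 v (v.1, v.2 + 1) x rfl (Nat.lt_succ_self _)⟩

theorem isSStd_of_adjLE {R : ℕ × ℕ → WithTop X}
    (hrow : ∀ v : ℕ × ℕ, AdjLE par false (R v) (R (v.1, v.2 + 1)))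
    (hcol : ∀ v : ℕ × ℕ, AdjLE par true (R v) (R (v.1 + 1, v.2))) : IsSStd par R := by
  have mono : ∀ a b : ℕ × ℕ, a.1 ≤ b.1 → a.2 ≤ b.2 → R a ≤ R b := fun a b h1 h2 =>
    calc R a ≤ R (a.1, b.2) := monotone_nat_of_le_succ (fun j => (hrow (a.1, j)).1) h2
      _ ≤ R b := monotone_nat_of_le_succ (fun i => (hcol (i, b.2)).1) h1
  refine ⟨mono, fun a b x h1 h2 ha hb => ?_, fun a b x h1 h2 ha hb => ?_⟩
  · refine (hrow a).2 x ha (le_antisymm ?_ (ha ▸ (hrow a).1))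
    exact hb ▸ mono _ _ h1.le h2
  · refine (hcol a).2 x ha (le_antisymm ?_ (ha ▸ (hcol a).1))
    exact hb ▸ mono _ _ h2 h1.le

end Adjacent

section Extraction

variable [LinearOrder X] {ε : Bool} {par : X → Bool} {T : ℕ × ℕ → WithTop X}
  {u : ℕ × ℕ} {c : ℕ → ℕ × ℕ} {ys : ℕ → X} {m : ℕ} {R : ℕ × ℕ → WithTop X}

@[simp] theorem coord_false (p : ℕ × ℕ) : coord false p = p.1 := rfl

@[simp] theorem coord_true (p : ℕ × ℕ) : coord true p = p.2 := rfl

theorem cmpExt_self_iff {y : X} : cmpExt ε y y ↔ ε = true := by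
  cases ε <;> simp [cmpExt]

namespace ExtractSeq

theorem apply_eq (hc : ExtractSeq ε par T u c ys m) {j : ℕ} (hj : j < m) :
    T (c j) = ys j := by
  cases j with
  | zero => rw [hc.2.1]; exact hc.2.2.1
  | succ j => exact (hc.2.2.2.1 j hj).2.2.1

theorem ys_succ_le (hc : ExtractSeq ε par T u c ys m) {j : ℕ} (hj : j + 1 < m) :
    ys (j + 1) ≤ ys j := by
  have h := (hc.2.2.2.1 j hj).2.2.2.1
  rw [hc.apply_eq hj] at h
  cases ε
  · exact WithTop.coe_le_coe.mp h.le
  · exact WithTop.coe_le_coe.mp h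

theorem ys_le (hc : ExtractSeq ε par T u c ys m) {j k : ℕ} (hjk : j ≤ k) (hk : k < m) :
    ys k ≤ ys j := by
  induction k, hjk using Nat.le_induction with
  | base => exact le_rfl
  | succ k _ ih => exact (hc.ys_succ_le hk).trans (ih (Nat.lt_of_succ_lt hk))

theorem eps_eq_true (hc : ExtractSeq ε par T u c ys m) {j : ℕ} (hj : j + 1 < m)
    (h : ys (j + 1) = ys j) : ε = true := by
  have hcmp := (hc.2.2.2.1 j hj).2.2.2.1
  rwa [hc.apply_eq hj, h, cmpExt_self_iff] at hcmp

theorem coord_add_sub (hc : ExtractSeq ε par T u c ys m) {x : X} {j k : ℕ}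
    (hjk : j ≤ k) (hk : k < m) (hx : ∀ i, j ≤ i → i < k → ys i = x) :
    coord (Bool.xor ε (par x)) (c k) + (k - j) = coord (Bool.xor ε (par x)) (c j) := by
  induction k, hjk using Nat.le_induction with
  | base => simp
  | succ k hjk ih =>
    have hstep := (hc.2.2.2.1 k hk).2.1
    rw [hx k hjk (Nat.lt_succ_self k)] at hstep
    have := ih (Nat.lt_of_succ_lt hk) fun i h1 h2 => hx i h1 (h2.trans (Nat.lt_succ_self k))
    omega

theorem node_ne_of_lt (hc : ExtractSeq ε par T u c ys m) {j k : ℕ} (hjk : j < k) (hk : k < m) :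
    c j ≠ c k := by
  intro heq
  have hys : ys k = ys j := by
    simpa [hc.apply_eq hk, hc.apply_eq (hjk.trans hk)] using congrArg T heq.symm
  have hrun : ∀ i, j ≤ i → i < k → ys i = ys j := fun i h1 h2 =>
    le_antisymm (hc.ys_le h1 (h2.trans hk)) (hys ▸ hc.ys_le h2.le hk)
  have := hc.coord_add_sub hjk.le hk hrun
  rw [heq] at this
  omega

theorem coord_not_le_succ (hc : ExtractSeq ε par T u c ys m) (hT : IsSStd par T) {j : ℕ}
    (hj : j + 1 < m) :
    coord (!(Bool.xor ε (par (ys j)))) (c j) ≤ coord (!(Bool.xor ε (par (ys j)))) (c (j + 1)) := by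
  obtain ⟨hpos, hdrop, -, -, hmax⟩ := hc.2.2.2.1 j hj
  have hTj := hc.apply_eq (Nat.lt_of_succ_lt hj)
  -- the neighbour of `c j` in the previous row/column is itself a candidate
  cases hδ : Bool.xor ε (par (ys j)) <;> rw [hδ] at hpos hdrop hmax <;>
    simp only [coord_false, coord_true] at hpos hdrop
  · have hle : T ((c j).1 - 1, (c j).2) ≤ T (c j) := hT.1 _ _ (Nat.sub_le _ _) le_rfl
    refine hmax ((c j).1 - 1, (c j).2) (by simp only [coord_false]; omega) ?_
    cases ε
    · refine lt_of_le_of_ne (hle.trans_eq hTj) fun heq => ?_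
      have := hT.2.2 ((c j).1 - 1, (c j).2) (c j) _ rfl (by simp only; omega) heq hTj
      simp [this] at hδ
    · exact hle.trans_eq hTj
  · have hle : T ((c j).1, (c j).2 - 1) ≤ T (c j) := hT.1 _ _ le_rfl (Nat.sub_le _ _)
    refine hmax ((c j).1, (c j).2 - 1) (by simp only [coord_true]; omega) ?_
    cases ε
    · refine lt_of_le_of_ne (hle.trans_eq hTj) fun heq => ?_
      have := hT.2.1 ((c j).1, (c j).2 - 1) (c j) _ rfl (by simp only; omega) heq hTj
      simp [this] at hδ
    · exact hle.trans_eq hTj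

end ExtractSeq

theorem ExtractSeq.adjLE_right_of_row_step (hc : ExtractSeq ε par T u c ys m) {k : ℕ}
    (hk : k + 1 < m) (hδ : Bool.xor ε (par (ys k)) = false) :
    AdjLE par false (ys k) (T ((c (k + 1)).1, (c (k + 1)).2 + 1)) := by
  obtain ⟨-, hdrop, -, -, hmax⟩ := hc.2.2.2.1 k hk
  rw [hδ] at hdrop hmax
  have hnot : ¬cmpExt ε (ys k) (T ((c (k + 1)).1, (c (k + 1)).2 + 1)) := fun h => by
    have := hmax ((c (k + 1)).1, (c (k + 1)).2 + 1) hdrop h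
    simp at this
  cases ε
  · simp only [cmpExt, Bool.false_eq_true, if_false, not_lt] at hnot
    refine ⟨hnot, fun x hx _ => ?_⟩
    simpa [WithTop.coe_inj.mp hx] using hδ
  · simp only [cmpExt, if_true, not_le] at hnot
    exact ⟨hnot.le, fun x hx hw => absurd (hw.trans hx.symm).le hnot.not_ge⟩

theorem ExtractSeq.apply_ne_of_col_step (hc : ExtractSeq ε par T u c ys m) (hT : IsSStd par T)
    (hu1 : T (u.1 + 1, u.2) = ⊤) {k : ℕ} (hk : k < m)
    (hδ : Bool.xor ε (par (ys k)) = true) {w : ℕ × ℕ} (hw2 : w.2 = (c k).2)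
    (hw1 : (c k).1 < w.1) : T w ≠ ys k := by
  intro hTw
  cases k with
  | zero =>
    have h := hT.1 (u.1 + 1, u.2) w (by rw [← hc.2.1]; omega) (by rw [← hc.2.1]; omega)
    rw [hu1, hTw] at h
    exact WithTop.coe_ne_top (top_le_iff.mp h)
  | succ k =>
    obtain ⟨-, hdrop, hTk, hcmp, hmax⟩ := hc.2.2.2.1 k hk
    have hpar : par (ys (k + 1)) = true := hT.2.2 _ _ _ hw2.symm hw1 hTk hTw
    obtain rfl : ε = false := by simpa [hpar] using hδ
    have hlt : (ys (k + 1) : WithTop X) < ys k := hTk ▸ hcmp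
    cases hδ' : Bool.xor false (par (ys k))
    · -- `c k` lies weakly above-left of `w`
      have hcol := hc.coord_not_le_succ hT hk
      rw [hδ'] at hdrop hcol
      simp only [coord_false, coord_true, Bool.not_false] at hdrop hcol
      have h := hT.1 (c k) w (by omega) (by omega)
      rw [hc.apply_eq (Nat.lt_of_succ_lt hk), hTw] at h
      exact h.not_gt hlt
    · -- otherwise `w` would have been chosen instead of `c (k+1)`
      rw [hδ'] at hdrop hmax
      have h := hmax w (by simp only [coord_true] at hdrop ⊢; omega) (hTw ▸ hlt)
      simp only [Bool.not_true, coord_false] at h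
      omega

theorem ExtResult.apply_start (hR : ExtResult T c ys m R) (hc : ExtractSeq ε par T u c ys m) :
    R (c 0) = ⊤ :=
  hR.2.2 fun _ hk hkm => hc.node_ne_of_lt hk hkm

theorem ExtResult.apply_succ (hR : ExtResult T c ys m R) {k : ℕ} (hk : k + 1 < m) :
    R (c (k + 1)) = ys k :=
  hR.1 (k + 1) k.succ_pos hk

theorem ExtResult.le_apply (hR : ExtResult T c ys m R) (hc : ExtractSeq ε par T u c ys m)
    (w : ℕ × ℕ) : T w ≤ R w := by
  by_cases hw : ∃ k < m, w = c k
  · obtain ⟨k, hk, rfl⟩ := hw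
    cases k with
    | zero => exact (hR.apply_start hc).symm ▸ le_top
    | succ k =>
      rw [hR.apply_succ hk, hc.apply_eq hk]
      exact WithTop.coe_le_coe.mpr (hc.ys_succ_le hk)
  · push Not at hw
    exact (hR.2.1 w hw).ge

theorem ExtResult.adjLE_right_of_col_step (hR : ExtResult T c ys m R)
    (hc : ExtractSeq ε par T u c ys m) (hT : IsSStd par T) (hu1 : T (u.1 + 1, u.2) = ⊤)
    {k : ℕ} (hk : k + 1 < m) (hδ : Bool.xor ε (par (ys k)) = true) :
    AdjLE par false (ys k) (R ((c (k + 1)).1, (c (k + 1)).2 + 1)) := by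
  have hdrop := (hc.2.2.2.1 k hk).2.1
  have hrow := hc.coord_not_le_succ hT hk
  rw [hδ] at hdrop hrow
  simp only [coord_true, coord_false, Bool.not_true] at hdrop hrow
  by_cases hw : ((c (k + 1)).1, (c (k + 1)).2 + 1) = c k
  · rw [hw]
    cases k with
    | zero => exact (hR.apply_start hc).symm ▸ adjLE_top _ _
    | succ k =>
      rw [hR.apply_succ (Nat.lt_of_succ_lt hk)]
      refine ⟨WithTop.coe_le_coe.mpr (hc.ys_succ_le (Nat.lt_of_succ_lt hk)), fun x hx hx' => ?_⟩
      have hxk : ys (k + 1) = x := WithTop.coe_inj.mp hx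
      have hxk' : ys k = x := WithTop.coe_inj.mp hx'
      obtain rfl := hc.eps_eq_true (Nat.lt_of_succ_lt hk) (hxk.trans hxk'.symm)
      simpa [hxk] using hδ
  · have hlt : (c k).1 < (c (k + 1)).1 :=
      lt_of_le_of_ne hrow fun h => hw (Prod.ext h.symm (by simp only; omega))
    refine AdjLE.mono_right ⟨?_, fun x hx hw => ?_⟩ (hR.le_apply hc _)
    · rw [← hc.apply_eq (Nat.lt_of_succ_lt hk)]
      exact hT.1 _ _ hlt.le (by simp only; omega)
    · exact absurd (hw.trans hx.symm) <| hc.apply_ne_of_col_step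
        (w := ((c (k + 1)).1, (c (k + 1)).2 + 1)) hT hu1 (Nat.lt_of_succ_lt hk) hδ
        (by simp only; omega) hlt

theorem ExtResult.adjLE_right (hR : ExtResult T c ys m R) (hc : ExtractSeq ε par T u c ys m)
    (hT : IsSStd par T) (hu1 : T (u.1 + 1, u.2) = ⊤) (hu2 : T (u.1, u.2 + 1) = ⊤)
    (v : ℕ × ℕ) : AdjLE par false (R v) (R (v.1, v.2 + 1)) := by
  by_cases hv : ∃ k < m, v = c k
  · obtain ⟨k, hk, rfl⟩ := hv
    cases k with
    | zero =>
      have hTw : T ((c 0).1, (c 0).2 + 1) = ⊤ := by rw [hc.2.1]; exact hu2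
      have hRw := hR.le_apply hc ((c 0).1, (c 0).2 + 1)
      rw [hTw, top_le_iff] at hRw
      rw [hRw]
      exact adjLE_top _ _
    | succ k =>
      rw [hR.apply_succ hk]
      cases hδ : Bool.xor ε (par (ys k))
      · exact (hc.adjLE_right_of_row_step hk hδ).mono_right (hR.le_apply hc _)
      · exact hR.adjLE_right_of_col_step hc hT hu1 hk hδ
  · push Not at hv
    rw [hR.2.1 v hv]
    exact (hT.adjLE_right v).mono_right (hR.le_apply hc _)

end Extraction

section Transpose

variable [LinearOrder X] {ε : Bool} {par : X → Bool} {T : ℕ × ℕ → WithTop X}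
  {u : ℕ × ℕ} {c : ℕ → ℕ × ℕ} {ys : ℕ → X} {m : ℕ} {R : ℕ × ℕ → WithTop X}

theorem coord_swap (δ : Bool) (p : ℕ × ℕ) : coord δ p.swap = coord (!δ) p := by
  cases δ <;> rfl

theorem IsSStd.comp_swap (hT : IsSStd par T) : IsSStd (fun x => !par x) (T ∘ Prod.swap) := by
  refine ⟨fun a b h1 h2 => hT.1 _ _ h2 h1, fun a b x h1 h2 ha hb => ?_,
    fun a b x h1 h2 ha hb => ?_⟩
  · simp [hT.2.2 a.swap b.swap x h1 h2 ha hb]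
  · simp [hT.2.1 a.swap b.swap x h1 h2 ha hb]

theorem ExtractSeq.comp_swap (hc : ExtractSeq ε par T u c ys m) :
    ExtractSeq ε (fun x => !par x) (T ∘ Prod.swap) u.swap (Prod.swap ∘ c) ys m := by
  obtain ⟨hm, hc0, hy0, hstep, hlast⟩ := hc
  refine ⟨hm, by simp [hc0], by simpa using hy0, fun j hj => ?_, ?_⟩
  · obtain ⟨hpos, hdrop, hTj, hcmp, hmax⟩ := hstep j hj
    simp only [Function.comp_apply, coord_swap, Bool.xor_not, Bool.not_not, Prod.swap_swap]
    exact ⟨hpos, hdrop, hTj, hcmp, fun v hv1 hv2 => by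
      simpa [coord_swap] using hmax v.swap (by simpa [coord_swap] using hv1) hv2⟩
  · simpa [coord_swap] using hlast

theorem ExtResult.comp_swap (hR : ExtResult T c ys m R) :
    ExtResult (T ∘ Prod.swap) (Prod.swap ∘ c) ys m (R ∘ Prod.swap) := by
  refine ⟨hR.1, fun v hv => hR.2.1 v.swap fun k hk h => hv k hk ?_, fun h => hR.2.2 ?_⟩
  · simp [← h]
  · exact fun k hk hkm heq => h k hk hkm (by simp [heq])

theorem ExtResult.adjLE_down (hR : ExtResult T c ys m R) (hc : ExtractSeq ε par T u c ys m)
    (hT : IsSStd par T) (hu1 : T (u.1 + 1, u.2) = ⊤) (hu2 : T (u.1, u.2 + 1) = ⊤)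
    (v : ℕ × ℕ) : AdjLE par true (R v) (R (v.1 + 1, v.2)) :=
  adjLE_not.mp (hR.comp_swap.adjLE_right hc.comp_swap hT.comp_swap hu2 hu1 v.swap)

end Transpose

theorem stmt9_general [LinearOrder X] (ε : Bool) (par : X → Bool) (T : ℕ × ℕ → WithTop X)
    (u : ℕ × ℕ) (c : ℕ → ℕ × ℕ) (ys : ℕ → X) (m : ℕ) (R : ℕ × ℕ → WithTop X)
    (hT : IsSStd par T)
    (hu1 : T (u.1 + 1, u.2) = ⊤) (hu2 : T (u.1, u.2 + 1) = ⊤)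
    (hc : ExtractSeq ε par T u c ys m) (hR : ExtResult T c ys m R) :
    IsSStd par R :=
  isSStd_of_adjLE (hR.adjLE_right hc hT hu1 hu2) (hR.adjLE_down hc hT hu1 hu2)

/-- The result of `ε`-extraction at a removable node of a semistandard tableau is
semistandard. A node `u` of the diagram is removable when the nodes directly below and
directly to the right of it are empty. -/
theorem stmt9 [LinearOrder X] (ε : Bool) (par : X → Bool) (T : ℕ × ℕ → WithTop X)
    (u : ℕ × ℕ) (c : ℕ → ℕ × ℕ) (ys : ℕ → X) (m : ℕ) (R : ℕ × ℕ → WithTop X)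
    (hT : IsSStd par T) (hu : T u ≠ ⊤)
    (hu1 : T (u.1 + 1, u.2) = ⊤) (hu2 : T (u.1, u.2 + 1) = ⊤)
    (hc : ExtractSeq ε par T u c ys m) (hR : ExtResult T c ys m R) :
    IsSStd par R :=
  stmt9_general ε par T u c ys m R hT hu1 hu2 hc hR

end SuperRSK
end

section
/- (Bumped node filling lemma) Let b_1, ..., b_m be the bumped node sequence for the ε-insertion of x into a semistandard (X,λ)-tableau T, and δ ∈ Z/2. If i < j and the δ-coordinate of b_i is less than the δ-coordinate of b_j, then there is a sequence i ≤ t_0 < t_1 < ... < t_k < j with k = (b_j)_δ − (b_i)_δ − 1, such that (b_{t_a})_δ = (b_i)_δ + a and ε + parity(T(b_{t_a})) = δ for all a. -/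
namespace SuperRSK

variable {X Y : Type*}

/-!
Each bumping step moves in one direction `d = ε + parity`: the `d`-coordinate of the bumped
node goes up by exactly one, while the other coordinate cannot go up, because the node next to
`b s` in direction `d` already satisfies the insertion comparison (semistandardness forbids
equality there when `ε = 0`). So the `δ`-coordinate along `b i, …, b j` rises only by unit steps
in direction `δ`, and for each level `c` between `(b i)_δ` and `(b j)_δ` the last index at which
the coordinate is at most `c` is such a step, from `c` to `c + 1`. These last indices increase
with `c`.
-/

section LevelCrossing

variable (f : ℕ → ℕ) (P : ℕ → Prop) {i j c c' : ℕ}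

def lastAtMost (i j c : ℕ) : ℕ :=
  Nat.findGreatest (fun s => i ≤ s ∧ f s ≤ c) (j - 1)

variable {f}

theorem lastAtMost_spec (hij : i < j) (hc : f i ≤ c) :
    i ≤ lastAtMost f i j c ∧ lastAtMost f i j c < j ∧ f (lastAtMost f i j c) ≤ c := by
  have hspec : i ≤ lastAtMost f i j c ∧ f (lastAtMost f i j c) ≤ c :=
    Nat.findGreatest_spec (P := fun s => i ≤ s ∧ f s ≤ c) (m := i) (by omega) ⟨le_rfl, hc⟩
  have hle : lastAtMost f i j c ≤ j - 1 := Nat.findGreatest_le _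
  exact ⟨hspec.1, by omega, hspec.2⟩

theorem le_lastAtMost {s : ℕ} (his : i ≤ s) (hsj : s < j) (hs : f s ≤ c) :
    s ≤ lastAtMost f i j c :=
  Nat.le_findGreatest (by omega) ⟨his, hs⟩

theorem lt_apply_lastAtMost_succ (hij : i < j) (hc : f i ≤ c) (hcj : c < f j) :
    c < f (lastAtMost f i j c + 1) := by
  obtain ⟨hi, hj, -⟩ := lastAtMost_spec hij hc
  by_contra! hle
  obtain hend | hlt : lastAtMost f i j c + 1 = j ∨ lastAtMost f i j c + 1 < j := by omega
  · rw [hend] at hle; omega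
  · have := le_lastAtMost (by omega : i ≤ lastAtMost f i j c + 1) hlt hle; omega

variable (hstep : ∀ s, i ≤ s → s < j → f (s + 1) ≤ f s ∨ (f (s + 1) = f s + 1 ∧ P s))
include hstep

theorem lastAtMost_crossing (hij : i < j) (hc : f i ≤ c) (hcj : c < f j) :
    f (lastAtMost f i j c) = c ∧ P (lastAtMost f i j c) := by
  obtain ⟨hi, hj, hle⟩ := lastAtMost_spec hij hc
  have hup := lt_apply_lastAtMost_succ hij hc hcj
  rcases hstep _ hi hj with hdown | ⟨hunit, hP⟩
  · omega
  · exact ⟨by omega, hP⟩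

theorem lastAtMost_strictMono (hij : i < j) (hc : f i ≤ c) (hcc' : c < c') (hc'j : c' < f j) :
    lastAtMost f i j c < lastAtMost f i j c' := by
  obtain ⟨hi, hj, -⟩ := lastAtMost_spec hij hc
  have hup := lt_apply_lastAtMost_succ hij hc (hcc'.trans hc'j)
  have hcross := (lastAtMost_crossing P hstep hij hc (hcc'.trans hc'j)).1
  have hunit : f (lastAtMost f i j c + 1) = c + 1 := by
    rcases hstep _ hi hj with hdown | ⟨hunit, -⟩ <;> omega
  obtain hend | hnext : lastAtMost f i j c + 1 = j ∨ lastAtMost f i j c + 1 < j := by omega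
  · rw [hend] at hunit; omega
  · exact le_lastAtMost (s := lastAtMost f i j c + 1) (by omega) hnext (by omega)

theorem exists_levelCrossings (hij : i < j) (hlt : f i < f j) :
    ∃ t : ℕ → ℕ,
      i ≤ t 0 ∧
      (∀ a, a < f j - f i - 1 → t a < t (a + 1)) ∧
      t (f j - f i - 1) < j ∧
      ∀ a, a ≤ f j - f i - 1 → f (t a) = f i + a ∧ P (t a) := by
  refine ⟨fun a => lastAtMost f i j (f i + a), (lastAtMost_spec hij (by omega)).1,
    fun a ha => lastAtMost_strictMono P hstep hij (by omega) (by omega) (by omega),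
    (lastAtMost_spec hij (by omega)).2.1,
    fun a ha => lastAtMost_crossing P hstep hij (by omega) (by omega)⟩

end LevelCrossing

def shift (d : Bool) (u : ℕ × ℕ) : ℕ × ℕ := if d then (u.1, u.2 + 1) else (u.1 + 1, u.2)

theorem coord_shift (d : Bool) (u : ℕ × ℕ) : coord d (shift d u) = coord d u + 1 := by
  cases d <;> rfl

theorem coord_not_shift (d : Bool) (u : ℕ × ℕ) : coord (!d) (shift d u) = coord (!d) u := by
  cases d <;> rfl

section Semistandard

variable [LinearOrder X] {par : X → Bool} {T : ℕ × ℕ → WithTop X}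

theorem IsSStd.le_shift (hT : IsSStd par T) (d : Bool) (u : ℕ × ℕ) : T u ≤ T (shift d u) := by
  cases d
  · exact hT.1 _ _ (Nat.le_succ _) le_rfl
  · exact hT.1 _ _ le_rfl (Nat.le_succ _)

theorem IsSStd.par_eq_not_of_eq_shift (hT : IsSStd par T) (d : Bool) (u : ℕ × ℕ) (a : X)
    (hu : T u = a) (hv : T (shift d u) = a) : par a = !d := by
  cases d
  · exact hT.2.2 u (u.1 + 1, u.2) a rfl (Nat.lt_succ_self _) hu hv
  · exact hT.2.1 u (u.1, u.2 + 1) a rfl (Nat.lt_succ_self _) hu hv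

theorem IsSStd.cmpIns_shift (hT : IsSStd par T) (ε : Bool) (u : ℕ × ℕ) (a : X)
    (hu : T u = a) : cmpIns ε a (T (shift (Bool.xor ε (par a)) u)) := by
  have hle := hu ▸ hT.le_shift (Bool.xor ε (par a)) u
  cases ε
  · refine lt_of_le_of_ne hle fun heq => ?_
    have := hT.par_eq_not_of_eq_shift _ u a hu heq.symm
    cases h : par a <;> simp [h] at this
  · exact hle

end Semistandard

section Bumping

variable [LinearOrder X] {ε : Bool} {par : X → Bool} {T : ℕ × ℕ → WithTop X} {x : X}
  {b : ℕ → ℕ × ℕ} {xs : ℕ → X} {m s : ℕ}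

theorem BumpSeq.coord_succ_s13 (hb : BumpSeq ε par T x b xs m) (hs : s + 1 < m) :
    coord (Bool.xor ε (par (xs (s + 1)))) (b (s + 1)) =
      coord (Bool.xor ε (par (xs (s + 1)))) (b s) + 1 := by
  simpa using (hb.2.2.2.2 (s + 1) hs).1

theorem BumpSeq.coord_not_succ_le (hT : IsSStd par T) (hb : BumpSeq ε par T x b xs m)
    (hs : s + 1 < m) :
    coord (!Bool.xor ε (par (xs (s + 1)))) (b (s + 1)) ≤
      coord (!Bool.xor ε (par (xs (s + 1)))) (b s) := by
  set d := Bool.xor ε (par (xs (s + 1)))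
  have hmin := (hb.2.2.2.2 (s + 1) hs).2.2 (shift d (b s))
    (by rw [coord_shift, hb.coord_succ_s13 hs]) (hT.cmpIns_shift ε (b s) _ (hb.2.2.1 s hs))
  rwa [coord_not_shift] at hmin

theorem BumpSeq.coord_succ_le_or_step (hT : IsSStd par T) (hb : BumpSeq ε par T x b xs m)
    (δ : Bool) (hs : s + 1 < m) :
    coord δ (b (s + 1)) ≤ coord δ (b s) ∨
      (coord δ (b (s + 1)) = coord δ (b s) + 1 ∧ Bool.xor ε (par (xs (s + 1))) = δ) := by
  by_cases hd : Bool.xor ε (par (xs (s + 1))) = δ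
  · exact Or.inr ⟨hd ▸ hb.coord_succ_s13 hs, hd⟩
  · have hδ : δ = !Bool.xor ε (par (xs (s + 1))) := by
      revert hd; cases δ <;> cases Bool.xor ε (par (xs (s + 1))) <;> decide
    exact Or.inl (hδ ▸ hb.coord_not_succ_le hT hs)

end Bumping

/-- Bumped node filling lemma: if `i < j` and the `δ`-coordinate of `b i` is less than
that of `b j`, then there is an increasing sequence `i ≤ t 0 < ⋯ < t k < j`, with
`k = (b j)_δ − (b i)_δ − 1`, such that `(b (t a))_δ = (b i)_δ + a` and the entry bumped
at `b (t a)` (namely `xs (t a + 1)`) has `ε + parity = δ`, for all `a ≤ k`. -/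
theorem stmt13 [LinearOrder X] (ε δ : Bool) (par : X → Bool) (T : ℕ × ℕ → WithTop X)
    (x : X) (b : ℕ → ℕ × ℕ) (xs : ℕ → X) (m : ℕ)
    (hT : IsSStd par T) (hb : BumpSeq ε par T x b xs m)
    (i j : ℕ) (hij : i < j) (hj : j < m)
    (hlt : coord δ (b i) < coord δ (b j)) :
    ∃ t : ℕ → ℕ,
      i ≤ t 0 ∧
      (∀ a, a < coord δ (b j) - coord δ (b i) - 1 → t a < t (a + 1)) ∧
      t (coord δ (b j) - coord δ (b i) - 1) < j ∧
      ∀ a, a ≤ coord δ (b j) - coord δ (b i) - 1 →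
        coord δ (b (t a)) = coord δ (b i) + a ∧
        Bool.xor ε (par (xs (t a + 1))) = δ :=
  exists_levelCrossings (f := fun s => coord δ (b s))
    (fun s => Bool.xor ε (par (xs (s + 1))) = δ)
    (fun _ _ hsj => hb.coord_succ_le_or_step hT δ (by omega)) hij hlt

end SuperRSK
end
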